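/- arXiv:2104.04491 — 4 statements merged into one kernel-verified Lean document; each statement's English description precedes it below -/
import Mathlib

section
/- For all n ≥ 3, S_{n,n-2} = Σ_{k=1}^{n-1} S_{n-1,k}, i.e., the entry in position n-2 of row n of the Schröder triangle equals the sum of all entries of row n-1. -/
/-- For `n ≥ 3`, `S_{n,n-2}` equals the sum of all entries of row `n-1`
of the Schröder triangle. -/
theorem stmt_1 (S : ℕ → ℕ → ℤ)
    (h11 : S 1 1 = 1) (h21 : S 2 1 = 1) (h22 : S 2 2 = 1)
    (h0 : ∀ n, S n 0 = 0)
    (hrec : ∀ n k, 1 ≤ k → k ≤ n - 2 →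
      S n k = S n (k - 1) + 2 * S (n - 1) k - S (n - 1) (k - 1))
    (htop : ∀ n, 3 ≤ n → S n n = S n (n - 2) ∧ S n (n - 1) = S n (n - 2)) :
    ∀ n, 3 ≤ n → S n (n - 2) = ∑ k ∈ Finset.Icc 1 (n - 1), S (n - 1) k := by
  intro n hn
  obtain ⟨p, rfl⟩ : ∃ p, n = p + 3 := ⟨n - 3, by omega⟩
  have key : ∀ j, j ≤ p + 1 →
      S (p + 3) j = (∑ k ∈ Finset.Icc 1 j, S (p + 2) k) + S (p + 2) j := by
    intro j
    induction j with
    | zero => intro _; simp [h0]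
    | succ j ih =>
      intro hj
      have hrec' := hrec (p + 3) (j + 1) (by omega) (by omega)
      have e1 : j + 1 - 1 = j := by omega
      have e2 : p + 3 - 1 = p + 2 := by omega
      rw [e1, e2] at hrec'
      have hsum : ∑ k ∈ Finset.Icc 1 (j + 1), S (p + 2) k
          = (∑ k ∈ Finset.Icc 1 j, S (p + 2) k) + S (p + 2) (j + 1) :=
        Finset.sum_Icc_succ_top (by omega) _
      rw [hrec', ih (by omega), hsum]
      ring
  have hkey := key (p + 1) le_rfl
  have e3 : p + 3 - 2 = p + 1 := by omega
  have e4 : p + 3 - 1 = p + 2 := by omega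
  rw [e3, e4, hkey]
  have hsum : ∑ k ∈ Finset.Icc 1 (p + 2), S (p + 2) k
      = (∑ k ∈ Finset.Icc 1 (p + 1), S (p + 2) k) + S (p + 2) (p + 2) :=
    Finset.sum_Icc_succ_top (by omega) _
  rw [hsum]
  have heq : S (p + 2) (p + 1) = S (p + 2) (p + 2) := by
    rcases Nat.eq_zero_or_pos p with rfl | hp
    · rw [h21, h22]
    · obtain ⟨h1, h2⟩ := htop (p + 2) (by omega)
      have e5 : p + 2 - 1 = p + 1 := by omega
      have e6 : p + 2 - 2 = p := by omega
      rw [e6] at h1; rw [e5, e6] at h2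
      rw [h1, h2]
  rw [heq]
end

section
/- Let a_{n,i} = |{π ∈ S_n : π avoids 1234 and 1243, and π_1 = i}|. Then for 1 ≤ i ≤ n-2, a_{n,i} = 2·a_{n-1,i} + Σ_{ℓ=1}^{i-1} a_{n-1,ℓ}, and for n ≥ 3, a_{n,n} = a_{n,n-1} = Σ_{i=1}^{n-1} a_{n-1,i}. -/
/-- `π` contains the pattern `p` (given as the sequence of its values). -/
def ContainsPat {n k : ℕ} (π : Equiv.Perm (Fin n)) (p : Fin k → ℕ) : Prop :=
  ∃ f : Fin k → Fin n, StrictMono f ∧ ∀ a b : Fin k, p a < p b ↔ π (f a) < π (f b)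

/-- The first letter of `π` (in one-line notation, with values in `[n] = {1,…,n}`) is `i`. -/
def FirstIs {n : ℕ} (π : Equiv.Perm (Fin n)) (i : ℕ) : Prop :=
  ∀ j : Fin n, (j : ℕ) = 0 → (π j : ℕ) + 1 = i

/-- The number of permutations of `[n]` avoiding `1234` and `1243` with first letter `i`. -/
noncomputable def a3 (n i : ℕ) : ℕ :=
  Nat.card {π : Equiv.Perm (Fin n) //
    ¬ ContainsPat π ![1, 2, 3, 4] ∧ ¬ ContainsPat π ![1, 2, 4, 3] ∧ FirstIs π i}

open Equiv Finset

lemma contains1234_iff {N : ℕ} (π : Equiv.Perm (Fin N)) :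
    ContainsPat π ![1,2,3,4] ↔ ∃ a b c d : Fin N, a < b ∧ b < c ∧ c < d ∧
      (π a : ℕ) < (π b : ℕ) ∧ (π b : ℕ) < (π c : ℕ) ∧ (π c : ℕ) < (π d : ℕ) := by
  constructor
  · rintro ⟨f, hf, hp⟩
    refine ⟨f 0, f 1, f 2, f 3, hf (by decide), hf (by decide), hf (by decide),
      Fin.lt_def.mp ((hp 0 1).mp (by decide)),
      Fin.lt_def.mp ((hp 1 2).mp (by decide)),
      Fin.lt_def.mp ((hp 2 3).mp (by decide))⟩
  · rintro ⟨a, b, c, d, hab, hbc, hcd, v1, v2, v3⟩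
    rw [Fin.lt_def] at hab hbc hcd
    refine ⟨![a,b,c,d], ?_, ?_⟩
    · unfold StrictMono
      simp only [Fin.forall_fin_succ, IsEmpty.forall_iff, Matrix.cons_val_zero,
        Matrix.cons_val_succ, Fin.lt_def, Fin.val_succ, Fin.val_zero, true_and, and_true]
      omega
    · simp only [Fin.forall_fin_succ, IsEmpty.forall_iff, Matrix.cons_val_zero,
        Matrix.cons_val_succ, Fin.lt_def, Fin.val_succ, Fin.val_zero, true_and, and_true]
      norm_num
      omega

lemma contains1243_iff {N : ℕ} (π : Equiv.Perm (Fin N)) :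
    ContainsPat π ![1,2,4,3] ↔ ∃ a b c d : Fin N, a < b ∧ b < c ∧ c < d ∧
      (π a : ℕ) < (π b : ℕ) ∧ (π b : ℕ) < (π d : ℕ) ∧ (π d : ℕ) < (π c : ℕ) := by
  constructor
  · rintro ⟨f, hf, hp⟩
    refine ⟨f 0, f 1, f 2, f 3, hf (by decide), hf (by decide), hf (by decide),
      Fin.lt_def.mp ((hp 0 1).mp (by decide)),
      Fin.lt_def.mp ((hp 1 3).mp (by decide)),
      Fin.lt_def.mp ((hp 3 2).mp (by decide))⟩
  · rintro ⟨a, b, c, d, hab, hbc, hcd, v1, v2, v3⟩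
    rw [Fin.lt_def] at hab hbc hcd
    refine ⟨![a,b,c,d], ?_, ?_⟩
    · unfold StrictMono
      simp only [Fin.forall_fin_succ, IsEmpty.forall_iff, Matrix.cons_val_zero,
        Matrix.cons_val_succ, Fin.lt_def, Fin.val_succ, Fin.val_zero, true_and, and_true]
      omega
    · simp only [Fin.forall_fin_succ, IsEmpty.forall_iff, Matrix.cons_val_zero,
        Matrix.cons_val_succ, Fin.lt_def, Fin.val_succ, Fin.val_zero, true_and, and_true]
      norm_num
      omega

/-- Avoidance of both patterns. -/
def Av {N : ℕ} (π : Equiv.Perm (Fin N)) : Prop :=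
  ¬ ContainsPat π ![1,2,3,4] ∧ ¬ ContainsPat π ![1,2,4,3]

lemma sa_val {n : ℕ} (p : Fin (n+1)) (y : Fin n) :
    ((p.succAbove y : Fin (n+1)) : ℕ) = if (y:ℕ) < (p:ℕ) then (y:ℕ) else (y:ℕ)+1 := by
  rcases lt_or_ge (Fin.castSucc y) p with h | h
  · rw [Fin.succAbove_of_castSucc_lt _ _ h]
    rw [if_pos (by simpa [Fin.lt_def] using h)]
    rfl
  · rw [Fin.succAbove_of_le_castSucc _ _ h]
    have h' : (p:ℕ) ≤ (y:ℕ) := by simpa [Fin.le_def] using h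
    rw [if_neg (by omega)]
    simp

lemma sa_lt {n : ℕ} (p : Fin (n+1)) (x y : Fin n) :
    ((p.succAbove x : Fin (n+1)) : ℕ) < ((p.succAbove y : Fin (n+1)) : ℕ) ↔ (x:ℕ) < (y:ℕ) := by
  rw [sa_val, sa_val]; split_ifs <;> omega

/-- Insert value `p` at position `0`, i.e. the permutation `p, p.succAbove (e 0), …`. -/
def ins {n : ℕ} (p : Fin (n+1)) (e : Equiv.Perm (Fin n)) : Equiv.Perm (Fin (n+1)) :=
  (finSuccEquiv' (0 : Fin (n+1))).trans ((Equiv.optionCongr e).trans (finSuccEquiv' p).symm)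

@[simp] lemma ins_zero {n : ℕ} (p : Fin (n+1)) (e : Equiv.Perm (Fin n)) : ins p e 0 = p := by
  simp [ins, finSuccEquiv'_at]

@[simp] lemma ins_succ {n : ℕ} (p : Fin (n+1)) (e : Equiv.Perm (Fin n)) (j : Fin n) :
    ins p e j.succ = p.succAbove (e j) := by
  have h : (finSuccEquiv' (0 : Fin (n+1))) j.succ = some j := by
    have := finSuccEquiv'_succAbove (0 : Fin (n+1)) j
    rwa [Fin.succAbove_zero] at this
  simp [ins, h]

def insEquiv {n : ℕ} (p : Fin (n+1)) :
    Equiv.Perm (Fin n) ≃ {π : Equiv.Perm (Fin (n+1)) // π 0 = p} where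
  toFun e := ⟨ins p e, ins_zero p e⟩
  invFun π := Equiv.removeNone ((finSuccEquiv' (0 : Fin (n+1))).symm.trans
      (π.1.trans (finSuccEquiv' p)))
  left_inv e := by
    have hc : (finSuccEquiv' (0 : Fin (n+1))).symm.trans ((ins p e).trans (finSuccEquiv' p))
        = Equiv.optionCongr e := by
      ext x
      cases x with
      | none => simp [ins]
      | some j =>
        have h1 : (finSuccEquiv' (0 : Fin (n+1))).symm (some j) = j.succ := by
          simp [Fin.succAbove_zero]
        simp [h1]
    show Equiv.removeNone ((finSuccEquiv' (0 : Fin (n+1))).symm.trans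
        ((ins p e).trans (finSuccEquiv' p))) = e
    rw [hc, Equiv.removeNone_optionCongr]
  right_inv π := by
    rcases π with ⟨π, hπ⟩
    set c := (finSuccEquiv' (0 : Fin (n+1))).symm.trans (π.trans (finSuccEquiv' p)) with hcdef
    refine Subtype.ext (Equiv.ext fun x => ?_)
    refine Fin.cases ?_ (fun j => ?_) x
    · simpa using hπ.symm
    · have hne : π j.succ ≠ p := by
        rw [← hπ]; exact fun h => (Fin.succ_ne_zero j) (π.injective h)
      have hsome : ∃ x', c (some j) = some x' := by
        have h1 : (finSuccEquiv' (0 : Fin (n+1))).symm (some j) = j.succ := by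
          simp [Fin.succAbove_zero]
        rcases h : (finSuccEquiv' p) (π j.succ) with _ | w
        · exfalso
          have := congrArg (finSuccEquiv' p).symm h
          simp at this
          exact hne this
        · exact ⟨w, by simp [hcdef, h1, h]⟩
      have h2 : some (Equiv.removeNone c j) = c (some j) := Equiv.removeNone_some c hsome
      have h1 : (finSuccEquiv' (0 : Fin (n+1))).symm (some j) = j.succ := by
        simp [Fin.succAbove_zero]
      have h3 : c (some j) = (finSuccEquiv' p) (π j.succ) := by simp [hcdef, h1]
      rw [h3] at h2
      have := congrArg (finSuccEquiv' p).symm h2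
      simp at this
      rw [ins_succ]
      exact this

lemma card_fiber {n : ℕ} (p : Fin (n+1)) (P : Equiv.Perm (Fin (n+1)) → Prop) :
    Nat.card {π : Equiv.Perm (Fin (n+1)) // P π ∧ π 0 = p}
      = Nat.card {e : Equiv.Perm (Fin n) // P (ins p e)} := by
  refine (Nat.card_congr ?_).symm
  refine ⟨fun e => ⟨ins p e.1, e.2, ins_zero p e.1⟩,
    fun π => ⟨((insEquiv p).symm ⟨π.1, π.2.2⟩ : Equiv.Perm (Fin n)), ?_⟩, fun e => ?_, fun π => ?_⟩
  · have h : ins p ((insEquiv p).symm ⟨π.1, π.2.2⟩) = π.1 :=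
      congrArg Subtype.val ((insEquiv p).apply_symm_apply ⟨π.1, π.2.2⟩)
    rw [h]; exact π.2.1
  · exact Subtype.ext ((insEquiv p).symm_apply_apply e.1)
  · refine Subtype.ext ?_
    show ins p ((insEquiv p).symm ⟨π.1, π.2.2⟩ : Equiv.Perm (Fin n)) = π.1
    exact congrArg Subtype.val ((insEquiv p).apply_symm_apply ⟨π.1, π.2.2⟩)

lemma firstIs_iff {n : ℕ} (π : Equiv.Perm (Fin (n+1))) (i : ℕ) :
    FirstIs π i ↔ (π 0 : ℕ) + 1 = i := by
  constructor
  · intro h; exact h 0 rfl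
  · intro h j hj
    have : j = 0 := Fin.ext (by simpa using hj)
    rw [this]; exact h

lemma a3_card {n : ℕ} (i : ℕ) (hi : 1 ≤ i) :
    a3 (n+1) i = Nat.card {π : Equiv.Perm (Fin (n+1)) // Av π ∧ (π 0 : ℕ) = i - 1} := by
  unfold a3
  refine Nat.card_congr (Equiv.subtypeEquivRight fun π => ?_)
  rw [firstIs_iff]
  unfold Av
  constructor
  · rintro ⟨h1, h2, h3⟩; exact ⟨⟨h1, h2⟩, by omega⟩
  · rintro ⟨⟨h1, h2⟩, h3⟩; exact ⟨h1, h2, by omega⟩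

lemma card_part {n : ℕ} (P : Equiv.Perm (Fin (n+1)) → Prop) :
    Nat.card {e : Equiv.Perm (Fin (n+1)) // P e}
      = ∑ j ∈ Finset.range (n+1), Nat.card {e : Equiv.Perm (Fin (n+1)) // P e ∧ (e 0 : ℕ) = j} := by
  classical
  have E : {e : Equiv.Perm (Fin (n+1)) // P e}
      ≃ Σ q : Fin (n+1), {e : Equiv.Perm (Fin (n+1)) // P e ∧ e 0 = q} :=
    ((Equiv.sigmaFiberEquiv (fun e : {e : Equiv.Perm (Fin (n+1)) // P e} => e.1 0)).symm.trans
      (Equiv.sigmaCongrRight (fun q =>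
        (Equiv.subtypeSubtypeEquivSubtypeInter P (fun e => e 0 = q)))))
  rw [Nat.card_congr E]
  letI : ∀ q : Fin (n+1), Fintype {e : Equiv.Perm (Fin (n+1)) // P e ∧ e 0 = q} :=
    fun q => Fintype.ofFinite _
  rw [Nat.card_eq_fintype_card, Fintype.card_sigma]
  rw [← Fin.sum_univ_eq_sum_range
    (fun j => Nat.card {e : Equiv.Perm (Fin (n+1)) // P e ∧ (e 0 : ℕ) = j})]
  refine Finset.sum_congr rfl fun q _ => ?_
  rw [Nat.card_eq_fintype_card]
  exact Fintype.card_congr (Equiv.subtypeEquivRight fun e => by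
    rw [and_congr_right_iff]; intro _; exact ⟨fun h => by rw [h], fun h => Fin.ext h⟩)

lemma sum_Icc_one (g : ℕ → ℕ) (k : ℕ) :
    ∑ ℓ ∈ Finset.Icc 1 k, g ℓ = ∑ j ∈ Finset.range k, g (j+1) := by
  induction k with
  | zero => simp
  | succ k ih =>
    rw [Finset.sum_Icc_succ_top (by omega), ih, Finset.sum_range_succ]

def pr {M : ℕ} (x : Fin (M+1)) (h : (x:ℕ) ≠ 0) : Fin M :=
  ⟨(x:ℕ)-1, by have := x.isLt; omega⟩

lemma pr_succ {M : ℕ} (x : Fin (M+1)) (h : (x:ℕ) ≠ 0) : Fin.succ (pr x h) = x := by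
  apply Fin.ext
  rw [Fin.val_succ]
  show (x:ℕ) - 1 + 1 = (x:ℕ)
  omega

lemma shrink1234 {M : ℕ} (p : Fin (M+1)) (e : Equiv.Perm (Fin M)) (a b c d : Fin (M+1))
    (ha : (a:ℕ) ≠ 0) (hab : (a:ℕ) < (b:ℕ)) (hbc : (b:ℕ) < (c:ℕ)) (hcd : (c:ℕ) < (d:ℕ))
    (v1 : ((ins p e) a : ℕ) < ((ins p e) b : ℕ)) (v2 : ((ins p e) b : ℕ) < ((ins p e) c : ℕ))
    (v3 : ((ins p e) c : ℕ) < ((ins p e) d : ℕ)) : ContainsPat e ![1,2,3,4] := by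
  have hb : (b:ℕ) ≠ 0 := by omega
  have hc : (c:ℕ) ≠ 0 := by omega
  have hd : (d:ℕ) ≠ 0 := by omega
  have ea : (ins p e) a = p.succAbove (e (pr a ha)) := by
    have h := ins_succ p e (pr a ha); rwa [pr_succ] at h
  have eb : (ins p e) b = p.succAbove (e (pr b hb)) := by
    have h := ins_succ p e (pr b hb); rwa [pr_succ] at h
  have ec : (ins p e) c = p.succAbove (e (pr c hc)) := by
    have h := ins_succ p e (pr c hc); rwa [pr_succ] at h
  have ed : (ins p e) d = p.succAbove (e (pr d hd)) := by
    have h := ins_succ p e (pr d hd); rwa [pr_succ] at h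
  rw [ea, eb] at v1; rw [eb, ec] at v2; rw [ec, ed] at v3
  refine (contains1234_iff e).mpr ⟨pr a ha, pr b hb, pr c hc, pr d hd, ?_, ?_, ?_,
    (sa_lt p _ _).mp v1, (sa_lt p _ _).mp v2, (sa_lt p _ _).mp v3⟩ <;>
    · rw [Fin.lt_def]; show _ - 1 < _ - 1; omega

lemma shrink1243 {M : ℕ} (p : Fin (M+1)) (e : Equiv.Perm (Fin M)) (a b c d : Fin (M+1))
    (ha : (a:ℕ) ≠ 0) (hab : (a:ℕ) < (b:ℕ)) (hbc : (b:ℕ) < (c:ℕ)) (hcd : (c:ℕ) < (d:ℕ))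
    (v1 : ((ins p e) a : ℕ) < ((ins p e) b : ℕ)) (v2 : ((ins p e) b : ℕ) < ((ins p e) d : ℕ))
    (v3 : ((ins p e) d : ℕ) < ((ins p e) c : ℕ)) : ContainsPat e ![1,2,4,3] := by
  have hb : (b:ℕ) ≠ 0 := by omega
  have hc : (c:ℕ) ≠ 0 := by omega
  have hd : (d:ℕ) ≠ 0 := by omega
  have ea : (ins p e) a = p.succAbove (e (pr a ha)) := by
    have h := ins_succ p e (pr a ha); rwa [pr_succ] at h
  have eb : (ins p e) b = p.succAbove (e (pr b hb)) := by
    have h := ins_succ p e (pr b hb); rwa [pr_succ] at h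
  have ec : (ins p e) c = p.succAbove (e (pr c hc)) := by
    have h := ins_succ p e (pr c hc); rwa [pr_succ] at h
  have ed : (ins p e) d = p.succAbove (e (pr d hd)) := by
    have h := ins_succ p e (pr d hd); rwa [pr_succ] at h
  rw [ea, eb] at v1; rw [eb, ed] at v2; rw [ed, ec] at v3
  refine (contains1243_iff e).mpr ⟨pr a ha, pr b hb, pr c hc, pr d hd, ?_, ?_, ?_,
    (sa_lt p _ _).mp v1, (sa_lt p _ _).mp v2, (sa_lt p _ _).mp v3⟩ <;>
    · rw [Fin.lt_def]; show _ - 1 < _ - 1; omega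

lemma grow1234 {M : ℕ} (p : Fin (M+1)) (e : Equiv.Perm (Fin M))
    (h : ContainsPat e ![1,2,3,4]) : ContainsPat (ins p e) ![1,2,3,4] := by
  rcases (contains1234_iff e).mp h with ⟨a, b, c, d, hab, hbc, hcd, v1, v2, v3⟩
  rw [Fin.lt_def] at hab hbc hcd
  refine (contains1234_iff _).mpr ⟨a.succ, b.succ, c.succ, d.succ, ?_, ?_, ?_, ?_, ?_, ?_⟩ <;>
    simp only [Fin.lt_def, Fin.val_succ, ins_succ, sa_lt] <;> omega

lemma grow1243 {M : ℕ} (p : Fin (M+1)) (e : Equiv.Perm (Fin M))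
    (h : ContainsPat e ![1,2,4,3]) : ContainsPat (ins p e) ![1,2,4,3] := by
  rcases (contains1243_iff e).mp h with ⟨a, b, c, d, hab, hbc, hcd, v1, v2, v3⟩
  rw [Fin.lt_def] at hab hbc hcd
  refine (contains1243_iff _).mpr ⟨a.succ, b.succ, c.succ, d.succ, ?_, ?_, ?_, ?_, ?_, ?_⟩ <;>
    simp only [Fin.lt_def, Fin.val_succ, ins_succ, sa_lt] <;> omega

lemma ins_zero_val {M : ℕ} (p : Fin (M+1)) (e : Equiv.Perm (Fin M)) (a : Fin (M+1))
    (ha : (a:ℕ) = 0) : ((ins p e) a : ℕ) = (p:ℕ) := by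
  have : a = 0 := Fin.ext (by simpa using ha)
  rw [this, ins_zero]

lemma av_ins_inert {M : ℕ} (p : Fin (M+1)) (e : Equiv.Perm (Fin M)) (hp : M ≤ (p:ℕ) + 2) :
    Av (ins p e) ↔ Av e := by
  constructor
  · rintro ⟨h1, h2⟩
    exact ⟨fun hc => h1 (grow1234 p e hc), fun hc => h2 (grow1243 p e hc)⟩
  · rintro ⟨h1, h2⟩
    constructor
    · intro hc
      rcases (contains1234_iff _).mp hc with ⟨a, b, c, d, hab, hbc, hcd, v1, v2, v3⟩
      rw [Fin.lt_def] at hab hbc hcd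
      by_cases ha : (a:ℕ) = 0
      · have hva := ins_zero_val p e a ha
        have h1b := ((ins p e) b).isLt
        have h1c := ((ins p e) c).isLt
        have h1d := ((ins p e) d).isLt
        omega
      · exact h1 (shrink1234 p e a b c d ha hab hbc hcd v1 v2 v3)
    · intro hc
      rcases (contains1243_iff _).mp hc with ⟨a, b, c, d, hab, hbc, hcd, v1, v2, v3⟩
      rw [Fin.lt_def] at hab hbc hcd
      by_cases ha : (a:ℕ) = 0
      · have hva := ins_zero_val p e a ha
        have h1b := ((ins p e) b).isLt
        have h1c := ((ins p e) c).isLt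
        have h1d := ((ins p e) d).isLt
        omega
      · exact h2 (shrink1243 p e a b c d ha hab hbc hcd v1 v2 v3)

lemma av_ins_small {M : ℕ} (p : Fin (M+2)) (e : Equiv.Perm (Fin (M+1)))
    (hs : ((e 0):ℕ) < (p:ℕ)) : Av (ins p e) ↔ Av e := by
  have hv1 : ((ins p e) (Fin.succ 0) : ℕ) = ((e 0):ℕ) := by
    rw [ins_succ, sa_val, if_pos hs]
  have hvs : (Fin.succ (0 : Fin (M+1)) : ℕ) = 1 := by simp
  constructor
  · rintro ⟨h1, h2⟩
    exact ⟨fun hc => h1 (grow1234 p e hc), fun hc => h2 (grow1243 p e hc)⟩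
  · rintro ⟨h1, h2⟩
    constructor
    · intro hc
      rcases (contains1234_iff _).mp hc with ⟨a, b, c, d, hab, hbc, hcd, v1, v2, v3⟩
      rw [Fin.lt_def] at hab hbc hcd
      by_cases ha : (a:ℕ) = 0
      · have hva := ins_zero_val p e a ha
        have hb1 : (b:ℕ) ≠ 1 := by
          intro hb1
          have : b = Fin.succ (0 : Fin (M+1)) := Fin.ext (by omega)
          rw [this] at v1
          omega
        refine h1 (shrink1234 p e (Fin.succ 0) b c d (by omega) (by omega) hbc hcd ?_ v2 v3)
        omega
      · exact h1 (shrink1234 p e a b c d ha hab hbc hcd v1 v2 v3)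
    · intro hc
      rcases (contains1243_iff _).mp hc with ⟨a, b, c, d, hab, hbc, hcd, v1, v2, v3⟩
      rw [Fin.lt_def] at hab hbc hcd
      by_cases ha : (a:ℕ) = 0
      · have hva := ins_zero_val p e a ha
        have hb1 : (b:ℕ) ≠ 1 := by
          intro hb1
          have : b = Fin.succ (0 : Fin (M+1)) := Fin.ext (by omega)
          rw [this] at v1
          omega
        refine h2 (shrink1243 p e (Fin.succ 0) b c d (by omega) (by omega) hbc hcd ?_ v2 v3)
        omega
      · exact h2 (shrink1243 p e a b c d ha hab hbc hcd v1 v2 v3)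

lemma not_av_mid {M : ℕ} (π : Equiv.Perm (Fin (M+2)))
    (h01 : (π 0 : ℕ) < (π 1 : ℕ)) (h1M : (π 1 : ℕ) < M) : ¬ Av π := by
  rintro ⟨h1234, h1243⟩
  set s := π.symm ⟨M, by omega⟩ with hs
  set t := π.symm ⟨M+1, by omega⟩ with ht
  have hπs : (π s : ℕ) = M := by rw [hs, Equiv.apply_symm_apply]
  have hπt : (π t : ℕ) = M+1 := by rw [ht, Equiv.apply_symm_apply]
  have hs0 : (s:ℕ) ≠ 0 := fun h => by
    have : s = 0 := Fin.ext h
    rw [this] at hπs; omega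
  have hs1 : (s:ℕ) ≠ 1 := fun h => by
    have : s = 1 := Fin.ext (by simpa using h)
    rw [this] at hπs; omega
  have ht0 : (t:ℕ) ≠ 0 := fun h => by
    have : t = 0 := Fin.ext h
    rw [this] at hπt
    have := (π 0).isLt
    omega
  have ht1 : (t:ℕ) ≠ 1 := fun h => by
    have : t = 1 := Fin.ext (by simpa using h)
    rw [this] at hπt
    have := (π 1).isLt
    omega
  have hst : (s:ℕ) ≠ (t:ℕ) := fun h => by
    have : s = t := Fin.ext h
    rw [this] at hπs; omega
  have h0v : ((0 : Fin (M+2)):ℕ) = 0 := rfl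
  have h1v : ((1 : Fin (M+2)):ℕ) = 1 := by simp
  rcases lt_or_gt_of_ne hst with h | h
  · exact h1234 ((contains1234_iff π).mpr ⟨0, 1, s, t, by rw [Fin.lt_def]; omega,
      by rw [Fin.lt_def]; omega, by rw [Fin.lt_def]; omega, by omega, by omega, by omega⟩)
  · exact h1243 ((contains1243_iff π).mpr ⟨0, 1, t, s, by rw [Fin.lt_def]; omega,
      by rw [Fin.lt_def]; omega, by rw [Fin.lt_def]; omega, by omega, by omega, by omega⟩)

def gm {M : ℕ} (x : Fin (M+2)) : Fin (M+1) :=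
  ⟨if (x:ℕ) = 0 then 0 else (x:ℕ) - 1, by have := x.isLt; split <;> omega⟩

def hm {M : ℕ} (y : Fin (M+1)) : Fin (M+2) :=
  ⟨if (y:ℕ) = 0 then 0 else (y:ℕ) + 1, by have := y.isLt; split <;> omega⟩

lemma gm_val {M : ℕ} (x : Fin (M+2)) :
    ((gm x : Fin (M+1)) : ℕ) = if (x:ℕ) = 0 then 0 else (x:ℕ) - 1 := rfl

lemma hm_val {M : ℕ} (y : Fin (M+1)) :
    ((hm y : Fin (M+2)) : ℕ) = if (y:ℕ) = 0 then 0 else (y:ℕ) + 1 := rfl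

lemma gm_hm {M : ℕ} (y : Fin (M+1)) : gm (hm y) = y := by
  apply Fin.ext
  rw [gm_val, hm_val]
  rcases Nat.eq_zero_or_pos (y:ℕ) with hy | hy
  · simp [hy]
  · rw [if_neg (show ¬((y:ℕ) = 0) by omega)]
    rw [if_neg (show ¬((y:ℕ)+1 = 0) by omega)]
    omega

lemma hm_ne_one {M : ℕ} (y : Fin (M+1)) : ((hm y : Fin (M+2)) : ℕ) ≠ 1 := by
  rw [hm_val]; split_ifs <;> omega

lemma hm_lt {M : ℕ} (y z : Fin (M+1)) (h : (y:ℕ) < (z:ℕ)) :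
    ((hm y : Fin (M+2)) : ℕ) < ((hm z : Fin (M+2)) : ℕ) := by
  rw [hm_val, hm_val]; split_ifs <;> omega

lemma gm_lt {M : ℕ} (x y : Fin (M+2)) (hx : (x:ℕ) ≠ 1) (hy : (y:ℕ) ≠ 1)
    (h : (x:ℕ) < (y:ℕ)) : ((gm x : Fin (M+1)) : ℕ) < ((gm y : Fin (M+1)) : ℕ) := by
  rw [gm_val, gm_val]; split_ifs <;> omega

lemma shift_lt {M δ s t : ℕ} (hδ : δ ≤ 1) (hs : s ≤ M) (ht : t ≤ M) :
    s + (if s = M then δ else 0) < t + (if t = M then δ else 0) ↔ s < t := by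
  split_ifs <;> omega

lemma av_del1 {M : ℕ} (π : Equiv.Perm (Fin (M+2))) (σ : Equiv.Perm (Fin (M+1))) (δ : ℕ)
    (hδ : δ ≤ 1) (htop : M ≤ (π 1 : ℕ))
    (hval : ∀ x : Fin (M+2), (x:ℕ) ≠ 1 →
      (π x : ℕ) = ((σ (gm x)) : ℕ) + (if ((σ (gm x)) : ℕ) = M then δ else 0)) :
    Av π ↔ Av σ := by
  have key : ∀ x : Fin (M+2), (x:ℕ) ≠ 1 → ∀ y : Fin (M+2), (y:ℕ) ≠ 1 →
      ((π x : ℕ) < (π y : ℕ) ↔ ((σ (gm x)) : ℕ) < ((σ (gm y)) : ℕ)) := by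
    intro x hx y hy
    rw [hval x hx, hval y hy]
    exact shift_lt hδ (Nat.lt_succ_iff.mp (σ (gm x)).isLt) (Nat.lt_succ_iff.mp (σ (gm y)).isLt)
  have keym : ∀ y : Fin (M+1), ∀ z : Fin (M+1),
      ((π (hm y) : ℕ) < (π (hm z) : ℕ) ↔ ((σ y) : ℕ) < ((σ z) : ℕ)) := by
    intro y z
    have h := key (hm y) (hm_ne_one y) (hm z) (hm_ne_one z)
    rwa [gm_hm, gm_hm] at h
  constructor
  · rintro ⟨h1, h2⟩
    constructor
    · intro hc
      rcases (contains1234_iff σ).mp hc with ⟨a, b, c, d, hab, hbc, hcd, v1, v2, v3⟩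
      rw [Fin.lt_def] at hab hbc hcd
      exact h1 ((contains1234_iff π).mpr ⟨hm a, hm b, hm c, hm d,
        Fin.lt_def.mpr (hm_lt _ _ hab), Fin.lt_def.mpr (hm_lt _ _ hbc),
        Fin.lt_def.mpr (hm_lt _ _ hcd),
        (keym a b).mpr v1, (keym b c).mpr v2, (keym c d).mpr v3⟩)
    · intro hc
      rcases (contains1243_iff σ).mp hc with ⟨a, b, c, d, hab, hbc, hcd, v1, v2, v3⟩
      rw [Fin.lt_def] at hab hbc hcd
      exact h2 ((contains1243_iff π).mpr ⟨hm a, hm b, hm c, hm d,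
        Fin.lt_def.mpr (hm_lt _ _ hab), Fin.lt_def.mpr (hm_lt _ _ hbc),
        Fin.lt_def.mpr (hm_lt _ _ hcd),
        (keym a b).mpr v1, (keym b d).mpr v2, (keym d c).mpr v3⟩)
  · rintro ⟨h1, h2⟩
    constructor
    · intro hc
      rcases (contains1234_iff π).mp hc with ⟨a, b, c, d, hab, hbc, hcd, v1, v2, v3⟩
      rw [Fin.lt_def] at hab hbc hcd
      have hbb := (π b).isLt
      have hcc := (π c).isLt
      have hdd := (π d).isLt
      have ha1 : (a:ℕ) ≠ 1 := by
        intro h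
        have h' : a = 1 := Fin.ext (by simpa using h)
        rw [h'] at v1
        omega
      have hb1 : (b:ℕ) ≠ 1 := by
        intro h
        have h' : b = 1 := Fin.ext (by simpa using h)
        rw [h'] at v2
        omega
      have hc1 : (c:ℕ) ≠ 1 := by omega
      have hd1 : (d:ℕ) ≠ 1 := by omega
      exact h1 ((contains1234_iff σ).mpr ⟨gm a, gm b, gm c, gm d,
        Fin.lt_def.mpr (gm_lt _ _ ha1 hb1 hab), Fin.lt_def.mpr (gm_lt _ _ hb1 hc1 hbc),
        Fin.lt_def.mpr (gm_lt _ _ hc1 hd1 hcd),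
        (key a ha1 b hb1).mp v1, (key b hb1 c hc1).mp v2, (key c hc1 d hd1).mp v3⟩)
    · intro hc
      rcases (contains1243_iff π).mp hc with ⟨a, b, c, d, hab, hbc, hcd, v1, v2, v3⟩
      rw [Fin.lt_def] at hab hbc hcd
      have hbb := (π b).isLt
      have hcc := (π c).isLt
      have hdd := (π d).isLt
      have ha1 : (a:ℕ) ≠ 1 := by
        intro h
        have h' : a = 1 := Fin.ext (by simpa using h)
        rw [h'] at v1
        omega
      have hb1 : (b:ℕ) ≠ 1 := by
        intro h
        have h' : b = 1 := Fin.ext (by simpa using h)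
        rw [h'] at v2
        omega
      have hc1 : (c:ℕ) ≠ 1 := by omega
      have hd1 : (d:ℕ) ≠ 1 := by omega
      exact h2 ((contains1243_iff σ).mpr ⟨gm a, gm b, gm c, gm d,
        Fin.lt_def.mpr (gm_lt _ _ ha1 hb1 hab), Fin.lt_def.mpr (gm_lt _ _ hb1 hc1 hbc),
        Fin.lt_def.mpr (gm_lt _ _ hc1 hd1 hcd),
        (key a ha1 b hb1).mp v1, (key b hb1 d hd1).mp v2, (key d hd1 c hc1).mp v3⟩)

lemma hval_top {M : ℕ} (p : Fin (M+2)) (p' : Fin (M+1)) (hp : (p':ℕ) = (p:ℕ))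
    (e'' : Equiv.Perm (Fin M)) :
    ∀ x : Fin (M+2), (x:ℕ) ≠ 1 →
      ((ins p (ins (Fin.last M) e'')) x : ℕ) = ((ins p' e'') (gm x) : ℕ) := by
  intro x hx
  induction x using Fin.cases with
  | zero =>
      have hg : gm (0 : Fin (M+2)) = (0 : Fin (M+1)) := Fin.ext (by simp [gm_val])
      rw [hg, ins_zero, ins_zero, hp]
  | succ y =>
      have hy0 : (y:ℕ) ≠ 0 := fun h => hx (by rw [Fin.val_succ, h])
      induction y using Fin.cases with
      | zero => exact absurd rfl hy0
      | succ z =>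
          have hg : gm (Fin.succ (Fin.succ z) : Fin (M+2)) = Fin.succ z := by
            apply Fin.ext
            rw [gm_val]
            simp [Fin.val_succ]
          rw [hg, ins_succ p _ (Fin.succ z), ins_succ (Fin.last M) e'' z, ins_succ p' e'' z,
            sa_val p, sa_val p', sa_val (Fin.last M)]
          have hz := (e'' z).isLt
          rw [Fin.val_last, if_pos hz, hp]

lemma hval_second {M : ℕ} (p : Fin (M+2)) (p' : Fin (M+1)) (q : Fin (M+1))
    (hq : (q:ℕ) = M - 1) (hM : 1 ≤ M) (hp : (p':ℕ) = (p:ℕ)) (hpm : (p:ℕ) + 1 ≤ M)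
    (e'' : Equiv.Perm (Fin M)) :
    ∀ x : Fin (M+2), (x:ℕ) ≠ 1 →
      ((ins p (ins q e'')) x : ℕ)
        = ((ins p' e'') (gm x) : ℕ) + (if (((ins p' e'') (gm x)) : ℕ) = M then 1 else 0) := by
  intro x hx
  induction x using Fin.cases with
  | zero =>
      have hg : gm (0 : Fin (M+2)) = (0 : Fin (M+1)) := Fin.ext (by simp [gm_val])
      rw [hg, ins_zero, ins_zero]
      rw [if_neg (show ¬(((p':Fin (M+1)):ℕ) = M) by omega)]
      omega
  | succ y =>
      have hy0 : (y:ℕ) ≠ 0 := fun h => hx (by rw [Fin.val_succ, h])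
      induction y using Fin.cases with
      | zero => exact absurd rfl hy0
      | succ z =>
          have hg : gm (Fin.succ (Fin.succ z) : Fin (M+2)) = Fin.succ z := by
            apply Fin.ext
            rw [gm_val]
            simp [Fin.val_succ]
          rw [hg, ins_succ p _ (Fin.succ z), ins_succ q e'' z, ins_succ p' e'' z,
            sa_val p, sa_val p', sa_val q]
          have hz := (e'' z).isLt
          rw [hq]
          split_ifs <;> omega

lemma c_small {k i j : ℕ} (hj : j < i - 1) (p : Fin (k+3)) (hp : (p:ℕ) = i - 1) :
    Nat.card {e : Equiv.Perm (Fin (k+2)) // Av (ins p e) ∧ ((e 0):ℕ) = j}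
      = a3 (k+2) (j+1) := by
  rw [a3_card (j+1) (by omega)]
  refine Nat.card_congr (Equiv.subtypeEquivRight fun e => ?_)
  constructor
  · rintro ⟨hav, h0⟩
    exact ⟨(av_ins_small p e (by omega)).mp hav, by omega⟩
  · rintro ⟨hav, h0⟩
    exact ⟨(av_ins_small p e (by omega)).mpr hav, by omega⟩

lemma c_mid {k i j : ℕ} (hij : i - 1 ≤ j) (hjk : j < k) (hi : 1 ≤ i)
    (p : Fin (k+3)) (hp : (p:ℕ) = i-1) :
    Nat.card {e : Equiv.Perm (Fin (k+2)) // Av (ins p e) ∧ ((e 0):ℕ) = j} = 0 := by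
  have : IsEmpty {e : Equiv.Perm (Fin (k+2)) // Av (ins p e) ∧ ((e 0):ℕ) = j} := by
    refine ⟨fun x => ?_⟩
    rcases x with ⟨e, hav, h0⟩
    have hπ1 : ((ins p e) 1 : ℕ) = j + 1 := by
      rw [← Fin.succ_zero_eq_one, ins_succ, sa_val, h0, hp, if_neg (by omega)]
    refine not_av_mid (M := k+1) (ins p e) ?_ ?_ hav
    · rw [hπ1, ins_zero, hp]; omega
    · rw [hπ1]; omega
  exact Nat.card_of_isEmpty

lemma c_top {k i : ℕ} (hi : 1 ≤ i) (hik : i ≤ k + 2) (p : Fin (k+3)) (hp : (p:ℕ) = i-1) :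
    Nat.card {e : Equiv.Perm (Fin (k+2)) // Av (ins p e) ∧ ((e 0):ℕ) = k+1}
      = a3 (k+2) i := by
  have hple : i - 1 < k + 2 := by omega
  set p' : Fin (k+2) := ⟨i-1, hple⟩ with hp'def
  have hp' : ((p' : Fin (k+2)) : ℕ) = i - 1 := rfl
  have h2 : ∀ e'' : Equiv.Perm (Fin (k+1)), Av (ins p (ins (Fin.last (k+1)) e'')) ↔ Av (ins p' e'') := by
    intro e''
    refine av_del1 (M := k+1) _ _ 0 (by omega) ?_ ?_
    · rw [← Fin.succ_zero_eq_one, ins_succ, ins_zero, sa_val, Fin.val_last, hp,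
        if_neg (by omega)]
      omega
    · intro x hx
      rw [hval_top p p' (by rw [hp', hp]) e'' x hx]
      simp
  calc Nat.card {e : Equiv.Perm (Fin (k+2)) // Av (ins p e) ∧ ((e 0):ℕ) = k+1}
      = Nat.card {e : Equiv.Perm (Fin (k+2)) // Av (ins p e) ∧ e 0 = Fin.last (k+1)} := by
        refine Nat.card_congr (Equiv.subtypeEquivRight fun e => ?_)
        constructor
        · rintro ⟨h, h0⟩
          exact ⟨h, Fin.ext (by rw [Fin.val_last]; exact h0)⟩
        · rintro ⟨h, h0⟩
          exact ⟨h, by rw [h0, Fin.val_last]⟩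
    _ = Nat.card {e'' : Equiv.Perm (Fin (k+1)) // Av (ins p (ins (Fin.last (k+1)) e''))} :=
        card_fiber (Fin.last (k+1)) (fun e => Av (ins p e))
    _ = Nat.card {e'' : Equiv.Perm (Fin (k+1)) // Av (ins p' e'')} :=
        Nat.card_congr (Equiv.subtypeEquivRight fun e'' => h2 e'')
    _ = Nat.card {σ : Equiv.Perm (Fin (k+2)) // Av σ ∧ σ 0 = p'} :=
        (card_fiber p' Av).symm
    _ = Nat.card {σ : Equiv.Perm (Fin (k+2)) // Av σ ∧ ((σ 0):ℕ) = i - 1} := by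
        refine Nat.card_congr (Equiv.subtypeEquivRight fun σ => ?_)
        constructor
        · rintro ⟨h, h0⟩
          exact ⟨h, by rw [h0]⟩
        · rintro ⟨h, h0⟩
          exact ⟨h, Fin.ext h0⟩
    _ = a3 (k+2) i := (a3_card i hi).symm

lemma c_second {k i : ℕ} (hi : 1 ≤ i) (hik : i ≤ k + 1) (p : Fin (k+3)) (hp : (p:ℕ) = i-1) :
    Nat.card {e : Equiv.Perm (Fin (k+2)) // Av (ins p e) ∧ ((e 0):ℕ) = k}
      = a3 (k+2) i := by
  have hple : i - 1 < k + 2 := by omega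
  set p' : Fin (k+2) := ⟨i-1, hple⟩ with hp'def
  have hp' : ((p' : Fin (k+2)) : ℕ) = i - 1 := rfl
  set q : Fin (k+2) := ⟨k, by omega⟩ with hqdef
  have hqv : ((q : Fin (k+2)) : ℕ) = k := rfl
  have h2 : ∀ e'' : Equiv.Perm (Fin (k+1)), Av (ins p (ins q e'')) ↔ Av (ins p' e'') := by
    intro e''
    refine av_del1 (M := k+1) _ _ 1 (by omega) ?_ ?_
    · rw [← Fin.succ_zero_eq_one, ins_succ, ins_zero, sa_val, hqv, hp,
        if_neg (by omega)]
    · intro x hx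
      exact hval_second p p' q (by rw [hqv]; omega) (by omega) (by rw [hp', hp]) (by omega) e'' x hx
  calc Nat.card {e : Equiv.Perm (Fin (k+2)) // Av (ins p e) ∧ ((e 0):ℕ) = k}
      = Nat.card {e : Equiv.Perm (Fin (k+2)) // Av (ins p e) ∧ e 0 = q} := by
        refine Nat.card_congr (Equiv.subtypeEquivRight fun e => ?_)
        constructor
        · rintro ⟨h, h0⟩
          exact ⟨h, Fin.ext (by rw [hqv]; exact h0)⟩
        · rintro ⟨h, h0⟩
          exact ⟨h, by rw [h0, hqv]⟩
    _ = Nat.card {e'' : Equiv.Perm (Fin (k+1)) // Av (ins p (ins q e''))} :=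
        card_fiber q (fun e => Av (ins p e))
    _ = Nat.card {e'' : Equiv.Perm (Fin (k+1)) // Av (ins p' e'')} :=
        Nat.card_congr (Equiv.subtypeEquivRight fun e'' => h2 e'')
    _ = Nat.card {σ : Equiv.Perm (Fin (k+2)) // Av σ ∧ σ 0 = p'} :=
        (card_fiber p' Av).symm
    _ = Nat.card {σ : Equiv.Perm (Fin (k+2)) // Av σ ∧ ((σ 0):ℕ) = i - 1} := by
        refine Nat.card_congr (Equiv.subtypeEquivRight fun σ => ?_)
        constructor
        · rintro ⟨h, h0⟩
          exact ⟨h, by rw [h0]⟩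
        · rintro ⟨h, h0⟩
          exact ⟨h, Fin.ext h0⟩
    _ = a3 (k+2) i := (a3_card i hi).symm

lemma a3_high {k : ℕ} (i : ℕ) (hi : 1 ≤ i) (hlow : k + 2 ≤ i) (hhigh : i ≤ k + 3) :
    a3 (k+3) i = ∑ ℓ ∈ Finset.Icc 1 (k+2), a3 (k+2) ℓ := by
  have hple : i - 1 < k + 3 := by omega
  set p : Fin (k+3) := ⟨i-1, hple⟩ with hpdef
  have hp : (p:ℕ) = i-1 := rfl
  calc a3 (k+3) i
      = Nat.card {π : Equiv.Perm (Fin (k+3)) // Av π ∧ ((π 0):ℕ) = i-1} := a3_card i hi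
    _ = Nat.card {π : Equiv.Perm (Fin (k+3)) // Av π ∧ π 0 = p} := by
        refine Nat.card_congr (Equiv.subtypeEquivRight fun π => ?_)
        constructor
        · rintro ⟨h, h0⟩; exact ⟨h, Fin.ext (by rw [hp]; exact h0)⟩
        · rintro ⟨h, h0⟩; exact ⟨h, by rw [h0, hp]⟩
    _ = Nat.card {e : Equiv.Perm (Fin (k+2)) // Av (ins p e)} := card_fiber p Av
    _ = Nat.card {e : Equiv.Perm (Fin (k+2)) // Av e} :=
        Nat.card_congr (Equiv.subtypeEquivRight fun e => av_ins_inert p e (by omega))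
    _ = ∑ j ∈ Finset.range (k+2), Nat.card {e : Equiv.Perm (Fin (k+2)) // Av e ∧ ((e 0):ℕ) = j} :=
        card_part (n := k+1) Av
    _ = ∑ j ∈ Finset.range (k+2), a3 (k+2) (j+1) := by
        refine Finset.sum_congr rfl fun j _ => ?_
        rw [a3_card (j+1) (by omega), Nat.add_sub_cancel]
    _ = ∑ ℓ ∈ Finset.Icc 1 (k+2), a3 (k+2) ℓ := (sum_Icc_one _ _).symm

/-- Recurrences for the first-letter distribution on `S_n(1234,1243)`. -/
theorem stmt_3 :
    (∀ n i, 1 ≤ i → i ≤ n - 2 →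
      a3 n i = 2 * a3 (n - 1) i + ∑ ℓ ∈ Finset.Icc 1 (i - 1), a3 (n - 1) ℓ) ∧
    (∀ n, 3 ≤ n →
      a3 n n = ∑ i ∈ Finset.Icc 1 (n - 1), a3 (n - 1) i ∧
      a3 n (n - 1) = ∑ i ∈ Finset.Icc 1 (n - 1), a3 (n - 1) i) := by
  constructor
  · intro n i hi1 hin
    obtain ⟨k, rfl⟩ : ∃ k, n = k+3 := ⟨n-3, by omega⟩
    have hik : i ≤ k+1 := by omega
    have hple : i - 1 < k+3 := by omega
    set p : Fin (k+3) := ⟨i-1, hple⟩ with hpdef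
    have hp : (p:ℕ) = i-1 := rfl
    rw [show k+3-1 = k+2 from rfl]
    have step : a3 (k+3) i
        = ∑ j ∈ Finset.range (k+2),
            Nat.card {e : Equiv.Perm (Fin (k+2)) // Av (ins p e) ∧ ((e 0):ℕ) = j} := by
      calc a3 (k+3) i
          = Nat.card {π : Equiv.Perm (Fin (k+3)) // Av π ∧ ((π 0):ℕ) = i-1} := a3_card i hi1
        _ = Nat.card {π : Equiv.Perm (Fin (k+3)) // Av π ∧ π 0 = p} := by
            refine Nat.card_congr (Equiv.subtypeEquivRight fun π => ?_)
            constructor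
            · rintro ⟨h, h0⟩; exact ⟨h, Fin.ext (by rw [hp]; exact h0)⟩
            · rintro ⟨h, h0⟩; exact ⟨h, by rw [h0, hp]⟩
        _ = Nat.card {e : Equiv.Perm (Fin (k+2)) // Av (ins p e)} := card_fiber p Av
        _ = ∑ j ∈ Finset.range (k+2),
              Nat.card {e : Equiv.Perm (Fin (k+2)) // Av (ins p e) ∧ ((e 0):ℕ) = j} :=
            card_part (n := k+1) (fun e => Av (ins p e))
    rw [step, Finset.sum_range_succ, Finset.sum_range_succ,
      c_top hi1 (by omega) p hp, c_second hi1 hik p hp]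
    have h1 : ∑ j ∈ Finset.range k,
        Nat.card {e : Equiv.Perm (Fin (k+2)) // Av (ins p e) ∧ ((e 0):ℕ) = j}
        = ∑ j ∈ Finset.range (i-1),
        Nat.card {e : Equiv.Perm (Fin (k+2)) // Av (ins p e) ∧ ((e 0):ℕ) = j} :=
      (Finset.sum_subset (Finset.range_subset_range.mpr (by omega))
        (fun x hx hnx => c_mid (by simpa using hnx) (Finset.mem_range.mp hx) hi1 p hp)).symm
    have h2 : ∑ j ∈ Finset.range (i-1),
        Nat.card {e : Equiv.Perm (Fin (k+2)) // Av (ins p e) ∧ ((e 0):ℕ) = j}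
        = ∑ j ∈ Finset.range (i-1), a3 (k+2) (j+1) :=
      Finset.sum_congr rfl fun j hj => c_small (Finset.mem_range.mp hj) p hp
    rw [h1, h2, ← sum_Icc_one]
    omega
  · intro n hn
    obtain ⟨k, rfl⟩ : ∃ k, n = k+3 := ⟨n-3, by omega⟩
    constructor
    · show a3 (k+3) (k+3) = ∑ i ∈ Finset.Icc 1 (k+2), a3 (k+2) i
      exact a3_high (k+3) (by omega) (by omega) (by omega)
    · show a3 (k+3) (k+2) = ∑ i ∈ Finset.Icc 1 (k+2), a3 (k+2) i
      exact a3_high (k+2) (by omega) (by omega) (by omega)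
end

section
/- For all n ≥ 1 and 1 ≤ i ≤ n, the number of permutations of [n] avoiding both 1423 and 1432 and starting with the letter i equals S_{n,i}. -/
/-!
Deleting the first letter `a` of a `{1423, 1432}`-avoider leaves an avoider with no occurrence
of `312` or `321` whose two smaller entries exceed `a`. Writing `G m t` (`avoidCount`) for the
number of avoiders of length `m` without such an occurrence above the threshold `t`, the avoiders of
`[n]` starting with `i` are counted by `G (n - 1) (i - 1)`. Sorting the permutations counted by
`G (m + 1) t` by their first letter `a`: if `a ≤ t` nothing beyond `G m a` is required; if
`a = t + 1` the threshold `t` passes on to the remaining letters; if `a ≥ t + 2` the letters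
`a - 1` and `a - 2` follow `a` and form a forbidden occurrence. Hence
`G (m + 1) t = ∑_{a ≤ t} G m a + G m t` for `t < m` and `G (m + 1) t = ∑_{a ≤ m} G m a` for
`t ≥ m`, and these yield the Schröder recurrences, which determine the triangle.
-/

open Equiv

def Avoids1423And1432 {n : ℕ} (σ : Perm (Fin n)) : Prop :=
  ¬ ∃ p₁ p₂ p₃ p₄ : Fin n, p₁ < p₂ ∧ p₂ < p₃ ∧ p₃ < p₄ ∧
    σ p₁ < σ p₃ ∧ σ p₁ < σ p₄ ∧ σ p₃ < σ p₂ ∧ σ p₄ < σ p₂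

def Avoids312And321Above {n : ℕ} (t : ℕ) (σ : Perm (Fin n)) : Prop :=
  ¬ ∃ q₁ q₂ q₃ : Fin n, q₁ < q₂ ∧ q₂ < q₃ ∧ σ q₂ < σ q₁ ∧ σ q₃ < σ q₁ ∧
    t ≤ (σ q₂ : ℕ) ∧ t ≤ (σ q₃ : ℕ)

lemma containsPat_of_lt {n : ℕ} {σ : Perm (Fin n)} {p₁ p₂ p₃ p₄ : Fin n} {v : Fin 4 → ℕ}
    (h₁₂ : p₁ < p₂) (h₂₃ : p₂ < p₃) (h₃₄ : p₃ < p₄)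
    (hv : ∀ a b, v a < v b ↔ σ (![p₁, p₂, p₃, p₄] a) < σ (![p₁, p₂, p₃, p₄] b)) :
    ContainsPat σ v :=
  ⟨_, Fin.strictMono_iff_lt_succ.2 fun i => by fin_cases i <;> assumption, hv⟩

lemma avoids1423And1432_iff {n : ℕ} (σ : Perm (Fin n)) :
    Avoids1423And1432 σ ↔ ¬ ContainsPat σ ![1, 4, 2, 3] ∧ ¬ ContainsPat σ ![1, 4, 3, 2] := by
  rw [Avoids1423And1432, ← not_or]
  refine not_congr ⟨fun ⟨p₁, p₂, p₃, p₄, h₁₂, h₂₃, h₃₄, h₁₃, h₁₄, h₃₂, h₄₂⟩ => ?_, ?_⟩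
  · rcases lt_or_gt_of_ne (σ.injective.ne h₃₄.ne) with h | h
    · exact Or.inl <| containsPat_of_lt h₁₂ h₂₃ h₃₄ fun a b => by
        fin_cases a <;> fin_cases b <;> simp <;> omega
    · exact Or.inr <| containsPat_of_lt h₁₂ h₂₃ h₃₄ fun a b => by
        fin_cases a <;> fin_cases b <;> simp <;> omega
  · rintro (⟨f, hf, hv⟩ | ⟨f, hf, hv⟩) <;>
    exact ⟨f 0, f 1, f 2, f 3, hf (by decide), hf (by decide), hf (by decide),
      (hv 0 2).1 (by decide), (hv 0 3).1 (by decide), (hv 2 1).1 (by decide),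
      (hv 3 1).1 (by decide)⟩

section

variable {n m t : ℕ}

lemma Avoids312And321Above.mono {t' : ℕ} {σ : Perm (Fin n)} (h : Avoids312And321Above t σ)
    (htt' : t ≤ t') : Avoids312And321Above t' σ :=
  fun ⟨q₁, q₂, q₃, h₁₂, h₂₃, h₂₁, h₃₁, h₂, h₃⟩ =>
    h ⟨q₁, q₂, q₃, h₁₂, h₂₃, h₂₁, h₃₁, htt'.trans h₂, htt'.trans h₃⟩

lemma Avoids1423And1432.avoids312And321Above_head {σ : Perm (Fin (m + 1))}
    (h : Avoids1423And1432 σ) : Avoids312And321Above (σ 0) σ := by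
  rintro ⟨q₁, q₂, q₃, h₁₂, h₂₃, h₂₁, h₃₁, h₂, h₃⟩
  have head_lt : ∀ q, 0 < q → σ 0 ≤ σ q → σ 0 < σ q := fun q hq hle =>
    hle.lt_of_ne (σ.injective.ne hq.ne)
  cases q₁ using Fin.cases with
  | zero => exact absurd h₂₁ (not_lt.2 (Fin.le_def.2 h₂))
  | succ x₁ =>
    exact h ⟨0, x₁.succ, q₂, q₃, Fin.succ_pos x₁, h₁₂, h₂₃,
      head_lt q₂ ((Fin.succ_pos x₁).trans h₁₂) (Fin.le_def.2 h₂),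
      head_lt q₃ ((Fin.succ_pos x₁).trans (h₁₂.trans h₂₃)) (Fin.le_def.2 h₃), h₂₁, h₃₁⟩

lemma not_avoids312And321Above_of_add_two_le_head (σ : Perm (Fin (m + 1)))
    (h : t + 2 ≤ (σ 0 : ℕ)) : ¬ Avoids312And321Above t σ := by
  intro hσ
  let r : ℕ → Fin (m + 1) := fun k => σ.symm ⟨σ 0 - k, by omega⟩
  have hr : ∀ k, (σ (r k) : ℕ) = σ 0 - k := fun k => by simp [r]
  have hr0 : ∀ k : ℕ, 0 < k → k ≤ σ 0 → 0 < r k := fun k hk hk' =>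
    Fin.pos_iff_ne_zero.2 fun h0 => by have := hr k; rw [h0] at this; omega
  have hr12 : r 1 ≠ r 2 := fun h12 => by have := hr 1; rw [h12, hr 2] at this; omega
  rcases lt_or_gt_of_ne hr12 with hlt | hlt
  · exact hσ ⟨0, r 1, r 2, hr0 1 (by omega) (by omega), hlt, by rw [Fin.lt_def, hr]; omega,
      by rw [Fin.lt_def, hr]; omega, by rw [hr]; omega, by rw [hr]; omega⟩
  · exact hσ ⟨0, r 2, r 1, hr0 2 (by omega) (by omega), hlt, by rw [Fin.lt_def, hr]; omega,
      by rw [Fin.lt_def, hr]; omega, by rw [hr]; omega, by rw [hr]; omega⟩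

end

-- In one-line notation: the letter `a`, followed by `τ` with its letters `≥ a` raised by one.
def consPerm {m : ℕ} (a : Fin (m + 1)) (τ : Perm (Fin m)) : Perm (Fin (m + 1)) :=
  (finSuccEquiv m).trans ((optionCongr τ).trans (finSuccEquiv' a).symm)

section

variable {m : ℕ} (a : Fin (m + 1)) (τ : Perm (Fin m))

@[simp]
lemma consPerm_zero : consPerm a τ 0 = a := by
  simp [consPerm]

@[simp]
lemma consPerm_succ (x : Fin m) : consPerm a τ x.succ = a.succAbove (τ x) := by
  simp [consPerm]

def consPermEquiv : Perm (Fin m) ≃ {σ : Perm (Fin (m + 1)) // σ 0 = a} where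
  toFun τ := ⟨consPerm a τ, consPerm_zero a τ⟩
  invFun σ := removeNone (((finSuccEquiv m).symm.trans σ.1).trans (finSuccEquiv' a))
  left_inv τ := by
    convert removeNone_optionCongr τ using 2
    ext x : 1
    simp [consPerm]
  right_inv σ := by
    obtain ⟨σ, hσ⟩ := σ
    have h : (((finSuccEquiv m).symm.trans σ).trans (finSuccEquiv' a)) none = none := by
      simp [hσ]
    ext x : 2
    simp [consPerm, map_equiv_removeNone, h]

lemma lt_consPerm_succ_iff (x : Fin m) : a < consPerm a τ x.succ ↔ (a : ℕ) ≤ τ x := by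
  simp [Fin.lt_succAbove_iff_le_castSucc, Fin.le_def]

lemma consPerm_succ_lt_iff (x : Fin m) : consPerm a τ x.succ < a ↔ (τ x : ℕ) < a := by
  rw [consPerm_succ, Fin.succAbove_lt_iff_castSucc_lt, Fin.lt_def, Fin.val_castSucc]

lemma consPerm_succ_lt_consPerm_succ_iff (x y : Fin m) :
    consPerm a τ x.succ < consPerm a τ y.succ ↔ τ x < τ y := by
  simp

lemma val_consPerm_succ (x : Fin m) :
    (consPerm a τ x.succ : ℕ) = τ x ∧ (τ x : ℕ) < a ∨
      (consPerm a τ x.succ : ℕ) = τ x + 1 ∧ (a : ℕ) ≤ τ x := by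
  rcases lt_or_ge (τ x).castSucc a with h | h
  · exact Or.inl ⟨by rw [consPerm_succ, Fin.succAbove_of_castSucc_lt _ _ h]; rfl, h⟩
  · exact Or.inr ⟨by rw [consPerm_succ, Fin.succAbove_of_le_castSucc _ _ h]; rfl, h⟩

lemma avoids1423And1432_consPerm_iff :
    Avoids1423And1432 (consPerm a τ) ↔ Avoids1423And1432 τ ∧ Avoids312And321Above a τ := by
  simp only [Avoids1423And1432, Avoids312And321Above, ← not_or]
  refine not_congr ⟨?_, ?_⟩
  · rintro ⟨p₁, p₂, p₃, p₄, h₁₂, h₂₃, h₃₄, h₁₃, h₁₄, h₃₂, h₄₂⟩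
    obtain ⟨x₂, rfl⟩ := Fin.exists_succ_eq.2 (Fin.ne_zero_of_lt h₁₂)
    obtain ⟨x₃, rfl⟩ := Fin.exists_succ_eq.2 (Fin.ne_zero_of_lt h₂₃)
    obtain ⟨x₄, rfl⟩ := Fin.exists_succ_eq.2 (Fin.ne_zero_of_lt h₃₄)
    rw [consPerm_succ_lt_consPerm_succ_iff] at h₃₂ h₄₂
    rw [Fin.succ_lt_succ_iff] at h₂₃ h₃₄
    cases p₁ using Fin.cases with
    | zero =>
      rw [consPerm_zero, lt_consPerm_succ_iff] at h₁₃ h₁₄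
      exact Or.inr ⟨x₂, x₃, x₄, h₂₃, h₃₄, h₃₂, h₄₂, h₁₃, h₁₄⟩
    | succ x₁ =>
      rw [consPerm_succ_lt_consPerm_succ_iff] at h₁₃ h₁₄
      rw [Fin.succ_lt_succ_iff] at h₁₂
      exact Or.inl ⟨x₁, x₂, x₃, x₄, h₁₂, h₂₃, h₃₄, h₁₃, h₁₄, h₃₂, h₄₂⟩
  · rintro (⟨x₁, x₂, x₃, x₄, h₁₂, h₂₃, h₃₄, h₁₃, h₁₄, h₃₂, h₄₂⟩ |
      ⟨x₂, x₃, x₄, h₂₃, h₃₄, h₃₂, h₄₂, h₃, h₄⟩)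
    · refine ⟨x₁.succ, x₂.succ, x₃.succ, x₄.succ, ?_⟩
      simp only [Fin.succ_lt_succ_iff, consPerm_succ_lt_consPerm_succ_iff]
      exact ⟨h₁₂, h₂₃, h₃₄, h₁₃, h₁₄, h₃₂, h₄₂⟩
    · refine ⟨0, x₂.succ, x₃.succ, x₄.succ, ?_⟩
      simp only [Fin.succ_pos, Fin.succ_lt_succ_iff, consPerm_succ_lt_consPerm_succ_iff,
        consPerm_zero, lt_consPerm_succ_iff]
      exact ⟨trivial, h₂₃, h₃₄, h₃, h₄, h₃₂, h₄₂⟩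

lemma avoids312And321Above_consPerm_iff {t : ℕ} (ha : (a : ℕ) = t + 1) :
    Avoids312And321Above t (consPerm a τ) ↔ Avoids312And321Above t τ := by
  simp only [Avoids312And321Above]
  refine not_congr ⟨?_, ?_⟩
  · rintro ⟨q₁, q₂, q₃, h₁₂, h₂₃, h₂₁, h₃₁, h₂, h₃⟩
    obtain ⟨x₂, rfl⟩ := Fin.exists_succ_eq.2 (Fin.ne_zero_of_lt h₁₂)
    obtain ⟨x₃, rfl⟩ := Fin.exists_succ_eq.2 (Fin.ne_zero_of_lt h₂₃)
    have := val_consPerm_succ a τ x₂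
    have := val_consPerm_succ a τ x₃
    cases q₁ using Fin.cases with
    | zero =>
      -- both letters would have to equal `t`
      rw [consPerm_zero, consPerm_succ_lt_iff] at h₂₁ h₃₁
      have : x₂ = x₃ := τ.injective (Fin.ext (by omega))
      exact absurd (congrArg Fin.succ this) h₂₃.ne
    | succ x₁ =>
      rw [consPerm_succ_lt_consPerm_succ_iff] at h₂₁ h₃₁
      rw [Fin.succ_lt_succ_iff] at h₁₂ h₂₃
      exact ⟨x₁, x₂, x₃, h₁₂, h₂₃, h₂₁, h₃₁, by omega, by omega⟩
  · rintro ⟨x₁, x₂, x₃, h₁₂, h₂₃, h₂₁, h₃₁, h₂, h₃⟩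
    have := val_consPerm_succ a τ x₂
    have := val_consPerm_succ a τ x₃
    refine ⟨x₁.succ, x₂.succ, x₃.succ, Fin.succ_lt_succ_iff.2 h₁₂, Fin.succ_lt_succ_iff.2 h₂₃,
      ?_, ?_, by omega, by omega⟩
    all_goals rwa [consPerm_succ_lt_consPerm_succ_iff]

end

noncomputable def avoidCount (m t : ℕ) : ℕ :=
  Nat.card {σ : Perm (Fin m) // Avoids1423And1432 σ ∧ Avoids312And321Above t σ}

section

variable {m : ℕ}

lemma card_head_eq_card_consPerm (P : Perm (Fin (m + 1)) → Prop) (a : Fin (m + 1)) :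
    Nat.card {σ // P σ ∧ σ 0 = a} = Nat.card {τ : Perm (Fin m) // P (consPerm a τ)} :=
  Nat.card_congr <| (subtypeEquivRight fun _ => and_comm).trans <|
    (subtypeSubtypeEquivSubtypeInter _ _).symm.trans <|
      ((consPermEquiv a).subtypeEquiv fun _ => Iff.rfl).symm

lemma card_avoids_head_eq (a : Fin (m + 1)) :
    Nat.card {σ // Avoids1423And1432 σ ∧ σ 0 = a} = avoidCount m a := by
  rw [card_head_eq_card_consPerm, avoidCount]
  exact Nat.card_congr (subtypeEquivRight fun τ => avoids1423And1432_consPerm_iff a τ)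

lemma card_avoids_above_head_eq (t : ℕ) (a : Fin (m + 1)) :
    Nat.card {σ // (Avoids1423And1432 σ ∧ Avoids312And321Above t σ) ∧ σ 0 = a} =
      if (a : ℕ) ≤ t then avoidCount m a else if (a : ℕ) = t + 1 then avoidCount m t else 0 := by
  split_ifs with hle heq
  · rw [← card_avoids_head_eq]
    refine Nat.card_congr (subtypeEquivRight fun σ => ?_)
    refine ⟨fun ⟨⟨h, _⟩, h0⟩ => ⟨h, h0⟩, fun ⟨h, h0⟩ => ⟨⟨h, ?_⟩, h0⟩⟩
    exact h.avoids312And321Above_head.mono (h0 ▸ hle)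
  · rw [card_head_eq_card_consPerm, avoidCount]
    refine Nat.card_congr (subtypeEquivRight fun τ => ?_)
    rw [avoids1423And1432_consPerm_iff, avoids312And321Above_consPerm_iff a τ heq]
    exact ⟨fun ⟨⟨h, _⟩, h'⟩ => ⟨h, h'⟩, fun ⟨h, h'⟩ => ⟨⟨h, h'.mono (by omega)⟩, h'⟩⟩
  · rw [Nat.card_eq_zero]
    exact Or.inl ⟨fun ⟨σ, ⟨_, h⟩, h0⟩ =>
      not_avoids312And321Above_of_add_two_le_head σ (by omega) h⟩

lemma avoidCount_zero (t : ℕ) : avoidCount 0 t = 1 := by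
  rw [avoidCount, Nat.card_eq_one_iff_unique]
  exact ⟨inferInstance, ⟨⟨1, fun ⟨p, _⟩ => p.elim0, fun ⟨q, _⟩ => q.elim0⟩⟩⟩

lemma avoidCount_succ_eq_sum_card_head (m t : ℕ) :
    avoidCount (m + 1) t = ∑ a : Fin (m + 1),
      Nat.card {σ // (Avoids1423And1432 σ ∧ Avoids312And321Above t σ) ∧ σ 0 = a} := by
  rw [avoidCount, ← Nat.card_sigma, ← Nat.card_congr (sigmaFiberEquiv fun σ => σ.1 0)]
  exact Nat.card_congr (sigmaCongrRight fun a =>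
    subtypeSubtypeEquivSubtypeInter (fun σ => _) (fun σ : Perm (Fin (m + 1)) => σ 0 = a))

lemma avoidCount_succ (m t : ℕ) :
    avoidCount (m + 1) t = ∑ a ∈ Finset.range (m + 1),
      if a ≤ t then avoidCount m a else if a = t + 1 then avoidCount m t else 0 := by
  rw [avoidCount_succ_eq_sum_card_head, ← Fin.sum_univ_eq_sum_range]
  exact Finset.sum_congr rfl fun a _ => card_avoids_above_head_eq t a

lemma avoidCount_succ_of_le {t : ℕ} (h : m ≤ t) :
    avoidCount (m + 1) t = ∑ a ∈ Finset.range (m + 1), avoidCount m a := by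
  rw [avoidCount_succ]
  exact Finset.sum_congr rfl fun a ha => if_pos (by have := Finset.mem_range.1 ha; omega)

lemma avoidCount_succ_of_lt {t : ℕ} (h : t < m) :
    avoidCount (m + 1) t = ∑ a ∈ Finset.range (t + 1), avoidCount m a + avoidCount m t := by
  rw [avoidCount_succ, ← Finset.sum_range_add_sum_Ico _ (show t + 2 ≤ m + 1 by omega),
    Finset.sum_range_succ, Finset.sum_eq_zero (s := Finset.Ico _ _) fun a ha => ?_, add_zero,
    if_neg (by omega), if_pos rfl]
  · exact congrArg₂ _ (Finset.sum_congr rfl fun a ha =>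
      if_pos (by have := Finset.mem_range.1 ha; omega)) rfl
  · have := Finset.mem_Ico.1 ha
    rw [if_neg (by omega), if_neg (by omega)]

lemma avoidCount_succ_zero (hm : 0 < m) : avoidCount (m + 1) 0 = 2 * avoidCount m 0 := by
  rw [avoidCount_succ_of_lt hm, Finset.sum_range_one]
  ring

lemma avoidCount_succ_recurrence {t : ℕ} (ht : t + 1 < m) :
    avoidCount (m + 1) (t + 1) + avoidCount m t =
      avoidCount (m + 1) t + 2 * avoidCount m (t + 1) := by
  rw [avoidCount_succ_of_lt ht, avoidCount_succ_of_lt (by omega : t < m),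
    Finset.sum_range_succ _ (t + 1)]
  ring

lemma avoidCount_add_two_top (m : ℕ) :
    avoidCount (m + 2) (m + 2) = avoidCount (m + 2) m ∧
      avoidCount (m + 2) (m + 1) = avoidCount (m + 2) m := by
  have htop : avoidCount (m + 1) m = avoidCount (m + 1) (m + 1) := by
    rw [avoidCount_succ_of_le le_rfl, avoidCount_succ_of_le (Nat.le_succ m)]
  rw [avoidCount_succ_of_le (by omega : m + 1 ≤ m + 2), avoidCount_succ_of_le le_rfl,
    avoidCount_succ_of_lt (Nat.lt_succ_self m), Finset.sum_range_succ _ (m + 1), htop]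
  exact ⟨rfl, rfl⟩

end

structure IsSchroederTriangle (S : ℕ → ℕ → ℤ) : Prop where
  one_one : S 1 1 = 1
  two_one : S 2 1 = 1
  two_two : S 2 2 = 1
  zero : ∀ n, S n 0 = 0
  recurrence : ∀ n k, 1 ≤ k → k ≤ n - 2 →
    S n k = S n (k - 1) + 2 * S (n - 1) k - S (n - 1) (k - 1)
  top : ∀ n, 3 ≤ n → S n n = S n (n - 2) ∧ S n (n - 1) = S n (n - 2)

namespace IsSchroederTriangle

variable {S T : ℕ → ℕ → ℤ}

theorem eq_of_le (hS : IsSchroederTriangle S) (hT : IsSchroederTriangle T) :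
    ∀ {n k : ℕ}, k ≤ n → S n k = T n k
  | _, 0, _ => by rw [hS.zero, hT.zero]
  | 1, 1, _ => by rw [hS.one_one, hT.one_one]
  | 2, 1, _ => by rw [hS.two_one, hT.two_one]
  | 2, 2, _ => by rw [hS.two_two, hT.two_two]
  | 1, _ + 2, hk | 2, _ + 3, hk => absurd hk (by omega)
  | n + 3, k + 1, hk => by
    by_cases hkn : k ≤ n
    · have hS' := hS.recurrence (n + 3) (k + 1) (by omega) (by omega)
      have hT' := hT.recurrence (n + 3) (k + 1) (by omega) (by omega)
      simp only [Nat.add_sub_cancel, show n + 3 - 1 = n + 2 by omega] at hS' hT'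
      rw [hS', hT', eq_of_le hS hT (n := n + 3) (k := k) (by omega),
        eq_of_le hS hT (n := n + 2) (k := k + 1) (by omega),
        eq_of_le hS hT (n := n + 2) (k := k) (by omega)]
    · obtain ⟨hS₁, hS₂⟩ := hS.top (n + 3) (by omega)
      obtain ⟨hT₁, hT₂⟩ := hT.top (n + 3) (by omega)
      simp only [show n + 3 - 1 = n + 2 by omega, show n + 3 - 2 = n + 1 by omega]
        at hS₁ hS₂ hT₁ hT₂
      obtain rfl | rfl : k = n + 1 ∨ k = n + 2 := by omega
      · rw [hS₂, hT₂, eq_of_le hS hT (n := n + 3) (k := n + 1) (by omega)]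
      · rw [hS₁, hT₁, eq_of_le hS hT (n := n + 3) (k := n + 1) (by omega)]

end IsSchroederTriangle

-- The case `k = 0` is set by hand, since `0 - 1 = 0` in `ℕ`.
noncomputable def avoidTriangle (n k : ℕ) : ℤ :=
  if k = 0 then 0 else avoidCount (n - 1) (k - 1)

lemma isSchroederTriangle_avoidTriangle : IsSchroederTriangle avoidTriangle where
  one_one := by simp [avoidTriangle, avoidCount_zero]
  two_one := by simp [avoidTriangle, avoidCount_succ_of_le, avoidCount_zero]
  two_two := by simp [avoidTriangle, avoidCount_succ_of_le, avoidCount_zero]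
  zero _ := if_pos rfl
  recurrence n k hk hkn := by
    obtain ⟨m, rfl⟩ : ∃ m, n = m + 2 := ⟨n - 2, by omega⟩
    obtain ⟨t, rfl⟩ : ∃ t, k = t + 1 := ⟨k - 1, by omega⟩
    simp only [avoidTriangle, Nat.add_sub_cancel, show m + 2 - 1 = m + 1 by omega,
      Nat.add_one_ne_zero, if_false]
    rcases t with _ | t
    · simp [avoidCount_succ_zero (show 0 < m by omega)]
    · have := avoidCount_succ_recurrence (show t + 1 < m by omega)
      simp only [Nat.add_one_ne_zero, if_false, Nat.add_sub_cancel]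
      omega
  top n hn := by
    obtain ⟨m, rfl⟩ : ∃ m, n = m + 3 := ⟨n - 3, by omega⟩
    have := avoidCount_add_two_top m
    simp only [avoidTriangle, show m + 3 - 1 = m + 2 by omega, show m + 3 - 2 = m + 1 by omega,
      Nat.add_one_ne_zero, if_false, Nat.add_sub_cancel, show m + 2 - 1 = m + 1 by omega]
    omega

lemma firstIs_succ_iff {m : ℕ} (π : Perm (Fin (m + 1))) (a : Fin (m + 1)) :
    FirstIs π (a + 1) ↔ π 0 = a :=
  ⟨fun h => Fin.ext (by simpa using h 0 rfl),
    fun h q hq => by rw [show q = 0 from Fin.ext hq, h]⟩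

lemma card_avoids_firstIs_eq {m : ℕ} (a : Fin (m + 1)) :
    Nat.card {π : Perm (Fin (m + 1)) //
      ¬ ContainsPat π ![1, 4, 2, 3] ∧ ¬ ContainsPat π ![1, 4, 3, 2] ∧ FirstIs π (a + 1)} =
      avoidCount m a := by
  rw [← card_avoids_head_eq]
  exact Nat.card_congr (subtypeEquivRight fun π => by
    rw [avoids1423And1432_iff, firstIs_succ_iff, and_assoc])

/-- The number of permutations of `[n]` avoiding the two patterns and starting with `i`
equals the Schröder triangle entry `S_{n,i}`. -/
theorem stmt_6 (S : ℕ → ℕ → ℤ)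
    (h11 : S 1 1 = 1) (h21 : S 2 1 = 1) (h22 : S 2 2 = 1)
    (h0 : ∀ n, S n 0 = 0)
    (hrec : ∀ n k, 1 ≤ k → k ≤ n - 2 →
      S n k = S n (k - 1) + 2 * S (n - 1) k - S (n - 1) (k - 1))
    (htop : ∀ n, 3 ≤ n → S n n = S n (n - 2) ∧ S n (n - 1) = S n (n - 2)) :
    ∀ n i, 1 ≤ n → 1 ≤ i → i ≤ n →
      (Nat.card {π : Equiv.Perm (Fin n) //
        ¬ ContainsPat π ![1, 4, 2, 3] ∧ ¬ ContainsPat π ![1, 4, 3, 2] ∧ FirstIs π i} : ℤ) = S n i := by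
  intro n i hn hi hin
  obtain ⟨m, rfl⟩ : ∃ m, n = m + 1 := ⟨n - 1, by omega⟩
  obtain ⟨a, rfl⟩ : ∃ a, i = a + 1 := ⟨i - 1, by omega⟩
  have hS : IsSchroederTriangle S := ⟨h11, h21, h22, h0, hrec, htop⟩
  rw [card_avoids_firstIs_eq ⟨a, by omega⟩, hS.eq_of_le isSchroederTriangle_avoidTriangle hin]
  simp [avoidTriangle]
end

section
/- For all n ≥ 2, the number of permutations of [n] avoiding both 213 and 312 equals 2^{n-1}. -/
open Equiv Equiv.Perm

section

variable {n : ℕ}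

def NoValley (π : Perm (Fin n)) : Prop :=
  ∀ ⦃i j k : Fin n⦄, i < j → j < k → ¬ (π j < π i ∧ π j < π k)

namespace NoValley

theorem of_subsingleton [Subsingleton (Fin n)] (π : Perm (Fin n)) : NoValley π :=
  fun i j _ hij => absurd hij (Subsingleton.elim i j ▸ lt_irrefl i)

theorem mul_revPerm {π : Perm (Fin n)} (hπ : NoValley π) : NoValley (π * Fin.revPerm) :=
  fun _ _ _ hij hjk h => hπ (Fin.rev_lt_rev.mpr hjk) (Fin.rev_lt_rev.mpr hij) h.symm

theorem apply_zero_eq_zero_or_apply_last_eq_zero {π : Perm (Fin (n + 1))} (hπ : NoValley π) :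
    π 0 = 0 ∨ π (Fin.last n) = 0 := by
  by_contra! h
  obtain ⟨j, hj⟩ := π.surjective 0
  refine hπ (i := 0) (j := j) (k := Fin.last n) ?_ ?_ ⟨?_, ?_⟩
  · exact Fin.pos_iff_ne_zero.mpr (by rintro rfl; exact h.1 hj)
  · exact lt_of_le_of_ne (Fin.le_last j) (by rintro rfl; exact h.2 hj)
  · exact hj ▸ Fin.pos_iff_ne_zero.mpr h.1
  · exact hj ▸ Fin.pos_iff_ne_zero.mpr h.2

theorem not_containsPat {π : Perm (Fin n)} (hπ : NoValley π) {p : Fin 3 → ℕ} (h10 : p 1 < p 0)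
    (h12 : p 1 < p 2) : ¬ ContainsPat π p := by
  rintro ⟨f, hf, hp⟩
  exact hπ (hf (by decide : (0 : Fin 3) < 1)) (hf (by decide : (1 : Fin 3) < 2))
    ⟨(hp 1 0).1 h10, (hp 1 2).1 h12⟩

end NoValley

theorem noValley_mul_revPerm_iff {π : Perm (Fin n)} :
    NoValley (π * Fin.revPerm) ↔ NoValley π :=
  ⟨fun h => by
    simpa [mul_assoc, show (Fin.revPerm : Perm (Fin n)) * Fin.revPerm = 1 from Equiv.ext Fin.rev_rev]
      using h.mul_revPerm, NoValley.mul_revPerm⟩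

theorem containsPat_of_not_noValley {π : Perm (Fin n)} (h : ¬ NoValley π) :
    ContainsPat π ![2, 1, 3] ∨ ContainsPat π ![3, 1, 2] := by
  obtain ⟨i, j, k, hij, hjk, hji, hjk'⟩ :
      ∃ i j k : Fin n, i < j ∧ j < k ∧ π j < π i ∧ π j < π k := by
    simpa [NoValley] using h
  have hmono : StrictMono ![i, j, k] := by
    simp [Fin.strictMono_iff_lt_succ, Fin.forall_fin_two, hij, hjk]
  rcases lt_or_gt_of_ne (π.injective.ne (hij.trans hjk).ne) with hik | hki
  · refine .inl ⟨![i, j, k], hmono, fun a b => ?_⟩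
    fin_cases a <;> fin_cases b <;> simp <;> omega
  · refine .inr ⟨![i, j, k], hmono, fun a b => ?_⟩
    fin_cases a <;> fin_cases b <;> simp <;> omega

theorem noValley_iff_not_containsPat (π : Perm (Fin n)) :
    NoValley π ↔ ¬ ContainsPat π ![2, 1, 3] ∧ ¬ ContainsPat π ![3, 1, 2] := by
  refine ⟨fun hπ => ⟨hπ.not_containsPat (by decide) (by decide),
    hπ.not_containsPat (by decide) (by decide)⟩, ?_⟩
  rintro ⟨h213, h312⟩
  by_contra h
  exact (containsPat_of_not_noValley h).elim h213 h312

-- `decomposeFin.symm (0, σ)` fixes `0` and sends `i.succ` to `(σ i).succ`.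
theorem noValley_decomposeFin_symm_zero_iff (σ : Perm (Fin n)) :
    NoValley (decomposeFin.symm (0, σ)) ↔ NoValley σ := by
  constructor
  · intro h i j k hij hjk hv
    refine h (Fin.succ_lt_succ_iff.mpr hij) (Fin.succ_lt_succ_iff.mpr hjk) ?_
    simpa [decomposeFin_symm_apply_succ] using hv
  · intro h i j k hij hjk hv
    cases i using Fin.cases with
    | zero => simp [decomposeFin_symm_apply_zero] at hv
    | succ i =>
      cases j using Fin.cases with
      | zero => exact absurd hij (Fin.not_lt_zero _)
      | succ j =>
        cases k using Fin.cases with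
        | zero => exact absurd hjk (Fin.not_lt_zero _)
        | succ k =>
          refine h (Fin.succ_lt_succ_iff.mp hij) (Fin.succ_lt_succ_iff.mp hjk) ?_
          simpa [decomposeFin_symm_apply_succ] using hv

theorem decomposeFin_symm_zero_snd {π : Perm (Fin (n + 1))} (hπ : π 0 = 0) :
    decomposeFin.symm (0, (decomposeFin π).2) = π := by
  have h0 : (decomposeFin π).1 = 0 := .symm <| by
    simpa [hπ] using decomposeFin_symm_apply_zero (decomposeFin π).1 (decomposeFin π).2
  rw [← h0, Prod.mk.eta, Equiv.symm_apply_apply]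

def noValleyFixingZeroEquiv :
    {π : Perm (Fin (n + 1)) // NoValley π ∧ π 0 = 0} ≃ {σ : Perm (Fin n) // NoValley σ} where
  toFun π := ⟨(decomposeFin π.1).2, (noValley_decomposeFin_symm_zero_iff _).1 <| by
    rw [decomposeFin_symm_zero_snd π.2.2]; exact π.2.1⟩
  invFun σ := ⟨decomposeFin.symm (0, σ), (noValley_decomposeFin_symm_zero_iff σ.1).2 σ.2,
    decomposeFin_symm_apply_zero 0 σ.1⟩
  left_inv π := Subtype.ext (decomposeFin_symm_zero_snd π.2.2)
  right_inv σ := Subtype.ext (by simp)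

def noValleyLastToZeroEquiv :
    {π : Perm (Fin (n + 1)) // NoValley π ∧ π (Fin.last n) = 0} ≃
      {π : Perm (Fin (n + 1)) // NoValley π ∧ π 0 = 0} :=
  (Equiv.mulRight Fin.revPerm).subtypeEquiv fun π => by
    rw [coe_mulRight, noValley_mul_revPerm_iff, Perm.mul_apply, Fin.revPerm_apply, Fin.rev_zero]

theorem card_noValley_succ_succ :
    Nat.card {π : Perm (Fin (n + 2)) // NoValley π} =
      2 * Nat.card {σ : Perm (Fin (n + 1)) // NoValley σ} := by
  classical
  have hdisj : Disjoint (fun π : Perm (Fin (n + 2)) => NoValley π ∧ π 0 = 0)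
      (fun π => NoValley π ∧ π (Fin.last _) = 0) := by
    simp only [Pi.disjoint_iff, Prop.disjoint_iff]
    rintro π ⟨⟨-, h0⟩, -, hl⟩
    exact Fin.last_pos.ne (π.injective (h0.trans hl.symm))
  have hsplit (π : Perm (Fin (n + 2))) :
      NoValley π ↔ (NoValley π ∧ π 0 = 0) ∨ (NoValley π ∧ π (Fin.last _) = 0) :=
    ⟨fun h => h.apply_zero_eq_zero_or_apply_last_eq_zero.imp (⟨h, ·⟩) (⟨h, ·⟩),
      fun h => h.elim And.left And.left⟩
  rw [Nat.card_congr ((subtypeEquivRight hsplit).trans (subtypeOrEquiv _ _ hdisj)), Nat.card_sum,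
    Nat.card_congr noValleyLastToZeroEquiv, Nat.card_congr noValleyFixingZeroEquiv, two_mul]

theorem card_noValley : ∀ n : ℕ, Nat.card {π : Perm (Fin n) // NoValley π} = 2 ^ (n - 1)
  | 0 | 1 => by
    rw [Nat.card_congr (subtypeUnivEquiv NoValley.of_subsingleton)]
    simp
  | n + 2 => by
    rw [card_noValley_succ_succ, card_noValley (n + 1)]
    simp [pow_succ']

end

theorem stmt_10_general (n : ℕ) :
    Nat.card {π : Equiv.Perm (Fin n) //
      ¬ ContainsPat π ![2, 1, 3] ∧ ¬ ContainsPat π ![3, 1, 2]} = 2 ^ (n - 1) := by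
  simp_rw [← noValley_iff_not_containsPat]
  exact card_noValley n

/-- For `n ≥ 2`, the number of permutations of `[n]` avoiding both `213` and `312`
equals `2^{n-1}`. -/
theorem stmt_10 (n : ℕ) (hn : 2 ≤ n) :
    Nat.card {π : Equiv.Perm (Fin n) //
      ¬ ContainsPat π ![2, 1, 3] ∧ ¬ ContainsPat π ![3, 1, 2]} = 2 ^ (n - 1) :=
  stmt_10_general n
end
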